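/- Let 𝔨 be a Lie algebra with ad-invariant inner product B and orthonormal basis k₁,…,k_l, and let φ : 𝔨 → 𝔰𝔬(𝔪) be a faithful Lie algebra representation on an inner product space 𝔪. Identify φ(kᵢ) with a 2-form on 𝔪 and let n₁,…,n_l be the corresponding basis of a copy 𝔫 of 𝔨. Then the 3-form Σᵢ φ(kᵢ) ∧ nᵢ on 𝔫 ⊕ 𝔪 is invariant under the diagonal action ψ(k) = ad(k) ⊕ φ(k) for all k ∈ 𝔨, i.e., ψ(k) · (Σᵢ φ(kᵢ) ∧ nᵢ) = 0. -/

import Mathlib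

/-!
Expanding in the basis, `Σᵢ φ(kᵢ) ⊗ nᵢ` is the canonical element of `𝔨* ⊗ 𝔰𝔬(𝔪)` attached to
`φ`, so the 3-form is `(u, v, w) ↦ ⟪φ(w₁) u₂, v₂⟫ + (cyclic)` and involves neither `B` nor the
basis. The trilinear form `(z, x, y) ↦ ⟪φ z x, y⟫` is `𝔨`-invariant because `φ` intertwines `ad`
with the commutator action on `𝔰𝔬(𝔪)` and `φ` acts by skew maps.
-/

open scoped RealInnerProductSpace BigOperators

/-- The 3-form `Σᵢ φ(kᵢ) ∧ nᵢ` on `𝔫 ⊕ 𝔪` (modelled as `K × M`), where the 2-form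
`φ(kᵢ)` lives on the `𝔪`-part and the 1-form `nᵢ = B(kᵢ, ·)` on the `𝔫`-part. -/
noncomputable def thetaForm {K M : Type*} [LieRing K] [LieAlgebra ℝ K]
    [NormedAddCommGroup M] [InnerProductSpace ℝ M] {l : ℕ}
    (B : K →ₗ[ℝ] K →ₗ[ℝ] ℝ) (k : Fin l → K) (φ : K →ₗ[ℝ] M →ₗ[ℝ] M)
    (u v w : K × M) : ℝ :=
  ∑ i : Fin l,
    (⟪φ (k i) u.2, v.2⟫ * B (k i) w.1 + ⟪φ (k i) v.2, w.2⟫ * B (k i) u.1 +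
      ⟪φ (k i) w.2, u.2⟫ * B (k i) v.1)

/-- The diagonal representation `ψ(k) = ad(k) ⊕ φ(k)` on `𝔫 ⊕ 𝔪 = K × M`. -/
def psiAct {K M : Type*} [LieRing K] [LieAlgebra ℝ K]
    [NormedAddCommGroup M] [InnerProductSpace ℝ M]
    (φ : K →ₗ[ℝ] M →ₗ[ℝ] M) (c : K) (u : K × M) : K × M :=
  (⁅c, u.1⁆, φ c u.2)

lemma sum_inner_mul_eq_inner_apply {K M : Type*} [AddCommGroup K] [Module ℝ K]
    [NormedAddCommGroup M] [InnerProductSpace ℝ M] {l : ℕ}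
    (B : K →ₗ[ℝ] K →ₗ[ℝ] ℝ) (hsymm : ∀ x y : K, B x y = B y x) (k : Fin l → K)
    (hcomplete : ∀ x : K, ∑ i : Fin l, B x (k i) • k i = x)
    (φ : K →ₗ[ℝ] M →ₗ[ℝ] M) (x y : M) (z : K) :
    ∑ i : Fin l, ⟪φ (k i) x, y⟫ * B (k i) z = ⟪φ z x, y⟫ := by
  conv_rhs => rw [← hcomplete z]
  simp only [map_sum, map_smul, LinearMap.coe_sum, Finset.sum_apply, LinearMap.smul_apply,
    sum_inner, real_inner_smul_left, hsymm z, mul_comm]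

lemma thetaForm_eq_inner {K M : Type*} [LieRing K] [LieAlgebra ℝ K]
    [NormedAddCommGroup M] [InnerProductSpace ℝ M] {l : ℕ}
    (B : K →ₗ[ℝ] K →ₗ[ℝ] ℝ) (hsymm : ∀ x y : K, B x y = B y x) (k : Fin l → K)
    (hcomplete : ∀ x : K, ∑ i : Fin l, B x (k i) • k i = x)
    (φ : K →ₗ[ℝ] M →ₗ[ℝ] M) (u v w : K × M) :
    thetaForm B k φ u v w = ⟪φ w.1 u.2, v.2⟫ + ⟪φ u.1 v.2, w.2⟫ + ⟪φ v.1 w.2, u.2⟫ := by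
  simp only [thetaForm, Finset.sum_add_distrib,
    sum_inner_mul_eq_inner_apply B hsymm k hcomplete]

lemma inner_apply_invariant {K M : Type*} [LieRing K] [LieAlgebra ℝ K]
    [NormedAddCommGroup M] [InnerProductSpace ℝ M]
    (φ : K →ₗ[ℝ] M →ₗ[ℝ] M)
    (hφLie : ∀ a b : K, φ ⁅a, b⁆ = φ a ∘ₗ φ b - φ b ∘ₗ φ a)
    (hφskew : ∀ (a : K) (x y : M), ⟪φ a x, y⟫ = -⟪x, φ a y⟫)
    (c z : K) (x y : M) :
    ⟪φ ⁅c, z⁆ x, y⟫ + ⟪φ z (φ c x), y⟫ + ⟪φ z x, φ c y⟫ = 0 := by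
  have hbracket : φ ⁅c, z⁆ x = φ c (φ z x) - φ z (φ c x) := by
    rw [hφLie]; rfl
  rw [hbracket, inner_sub_left, hφskew c (φ z x) y]
  ring

theorem theta_form_invariant_general
    {K M : Type*} [LieRing K] [LieAlgebra ℝ K]
    [NormedAddCommGroup M] [InnerProductSpace ℝ M] {l : ℕ}
    (B : K →ₗ[ℝ] K →ₗ[ℝ] ℝ)
    (hsymm : ∀ x y : K, B x y = B y x)
    (k : Fin l → K)
    (hcomplete : ∀ x : K, ∑ i : Fin l, B x (k i) • k i = x)
    (φ : K →ₗ[ℝ] M →ₗ[ℝ] M)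
    (hφLie : ∀ a b : K, φ ⁅a, b⁆ = φ a ∘ₗ φ b - φ b ∘ₗ φ a)
    (hφskew : ∀ (a : K) (x y : M), ⟪φ a x, y⟫ = -⟪x, φ a y⟫) :
    ∀ (c : K) (u v w : K × M),
      thetaForm B k φ (psiAct φ c u) v w + thetaForm B k φ u (psiAct φ c v) w +
        thetaForm B k φ u v (psiAct φ c w) = 0 := by
  intro c u v w
  simp only [thetaForm_eq_inner B hsymm k hcomplete, psiAct]
  linear_combination inner_apply_invariant φ hφLie hφskew c w.1 u.2 v.2 +
    inner_apply_invariant φ hφLie hφskew c u.1 v.2 w.2 +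
    inner_apply_invariant φ hφLie hφskew c v.1 w.2 u.2

/-- The 3-form `Σᵢ φ(kᵢ) ∧ nᵢ` on `𝔫 ⊕ 𝔪` is invariant under the
diagonal action `ψ(k) = ad(k) ⊕ φ(k)` for every `k ∈ 𝔨`. -/
theorem theta_form_invariant
    {K M : Type*} [LieRing K] [LieAlgebra ℝ K]
    [NormedAddCommGroup M] [InnerProductSpace ℝ M] {l : ℕ}
    (B : K →ₗ[ℝ] K →ₗ[ℝ] ℝ)
    (hsymm : ∀ x y : K, B x y = B y x)
    (hpos : ∀ x : K, x ≠ 0 → 0 < B x x)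
    (hinv : ∀ z x y : K, B ⁅z, x⁆ y + B x ⁅z, y⁆ = 0)
    (k : Fin l → K)
    (horth : ∀ i j, B (k i) (k j) = if i = j then (1 : ℝ) else 0)
    (hcomplete : ∀ x : K, ∑ i : Fin l, B x (k i) • k i = x)
    (φ : K →ₗ[ℝ] M →ₗ[ℝ] M)
    (hφLie : ∀ a b : K, φ ⁅a, b⁆ = φ a ∘ₗ φ b - φ b ∘ₗ φ a)
    (hφskew : ∀ (a : K) (x y : M), ⟪φ a x, y⟫ = -⟪x, φ a y⟫)
    (hφinj : Function.Injective φ) :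
    ∀ (c : K) (u v w : K × M),
      thetaForm B k φ (psiAct φ c u) v w + thetaForm B k φ u (psiAct φ c v) w +
        thetaForm B k φ u v (psiAct φ c w) = 0 :=
  theta_form_invariant_general B hsymm k hcomplete φ hφLie hφskew
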